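/- arXiv:1611.06282 — 2 statements merged into one kernel-verified Lean document; each statement's English description precedes it below -/
import Mathlib

section
/- Let G be a finite connected oriented graph and T a spanning tree. For any two fundamental circuits C_e, C_f (e ≠ f not in T), the number of edges in the intersection of the underlying circuits equals the absolute value of their inner product: |C_e ∩ C_f| = |(C_e, C_f)|, where the inner product is induced from the standard Euclidean inner product on Z^{E(G)}. -/
open Finset

/-- The signed flow along a walk `p` relative to an orientation `σ` of the edges:
the number of times `p` traverses `e` in the `σ`-direction minus the number of times
it traverses `e` backwards. -/
def walkFlow {V : Type*} [DecidableEq V] {G : SimpleGraph V} (σ : Sym2 V → V × V)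
    {u v : V} (p : G.Walk u v) (e : Sym2 V) : ℤ :=
  ((p.darts.filter (fun d => d.toProd = σ e)).length : ℤ) -
  ((p.darts.filter (fun d => d.toProd = (σ e).swap)).length : ℤ)

/-- The lattice of integer flows `F(G)` of an oriented graph `(G, σ)`: functions
`a : Sym2 V → ℤ` supported on the edges of `G` satisfying Kirchhoff's law at every
vertex (sum over edges with tail `v` equals sum over edges with head `v`). -/
def flowSubmodule {V : Type*} [Fintype V] [DecidableEq V] (G : SimpleGraph V)
    (σ : Sym2 V → V × V) : Submodule ℤ (Sym2 V → ℤ) where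
  carrier := {a | (∀ e, a e ≠ 0 → e ∈ G.edgeSet) ∧
    ∀ v : V, ∑ e ∈ univ.filter (fun e => (σ e).1 = v), a e
           = ∑ e ∈ univ.filter (fun e => (σ e).2 = v), a e}
  zero_mem' := by simp
  add_mem' := by
    rintro a b ⟨ha1, ha2⟩ ⟨hb1, hb2⟩
    refine ⟨fun e he => ?_, fun v => ?_⟩
    · by_contra h
      exact he (by
        have h1 : a e = 0 := by_contra fun h' => h (ha1 e h')
        have h2 : b e = 0 := by_contra fun h' => h (hb1 e h')
        simp [h1, h2])
    · simp only [Pi.add_apply, Finset.sum_add_distrib, ha2 v, hb2 v]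
  smul_mem' := by
    rintro c a ⟨ha1, ha2⟩
    refine ⟨fun e he => ha1 e ?_, fun v => ?_⟩
    · intro h; apply he; simp [h]
    · simp only [Pi.smul_apply, smul_eq_mul, ← Finset.mul_sum, ha2 v]

/-- The inner product on `Z^{E(G)}` (extended to all of `Z^{Sym2 V}`), with
`(e, f) = δ_{ef}` on edge generators. -/
def flowInner {V : Type*} [Fintype V] [DecidableEq V] (a b : Sym2 V → ℤ) : ℤ :=
  ∑ e : Sym2 V, a e * b e

/-- A circuit element of `F(G)`: the flow of an oriented circuit of `G`, i.e. the
signed indicator of a cycle (coefficients `±1` on the edges of the cycle, compatibly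
oriented, and `0` elsewhere). -/
def IsCircuitElement {V : Type*} [DecidableEq V] (G : SimpleGraph V)
    (σ : Sym2 V → V × V) (v : Sym2 V → ℤ) : Prop :=
  ∃ (u : V) (p : G.Walk u u), p.IsCycle ∧ v = walkFlow σ p

/-!
Deleting an edge `g` of the tree `T` splits it into two sides, and the signed flow of any walk
across `g` is the difference of the `0/1` side indicator at its endpoints. For distinct tree
edges `g, h`, the forest `T - g - h` has three components, so one of the four combinations of a
`g`-side and an `h`-side is empty. Hence two walks that both cross `g` and `h` traverse them with
the same relative orientation, i.e. `C_e(g) C_f(g)` is the same sign `±1` on the whole common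
support, and the inner product is that sign times the size of the support.
-/

open SimpleGraph Walk

section

variable {V : Type*} {G : SimpleGraph V}

open Classical in
noncomputable def SimpleGraph.headSide (G : SimpleGraph V) (σ : Sym2 V → V × V) (g : Sym2 V)
    (v : V) : Bool :=
  decide ((G.deleteEdges {g}).Reachable (σ g).2 v)

variable (σ : Sym2 V → V × V)

lemma SimpleGraph.headSide_eq_true_iff {g : Sym2 V} {v : V} :
    G.headSide σ g v = true ↔ (G.deleteEdges {g}).Reachable (σ g).2 v := by
  simp [headSide]

lemma SimpleGraph.Reachable.deleteEdges_left_or_right {c d v : V} (hvc : G.Reachable v c) :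
    (G.deleteEdges {s(c, d)}).Reachable c v ∨ (G.deleteEdges {s(c, d)}).Reachable d v := by
  obtain ⟨W⟩ := hvc
  induction W with
  | nil => exact Or.inl .rfl
  | @cons v w c hvw W ih =>
    by_cases he : s(v, w) = s(c, d)
    · rcases Sym2.eq_iff.mp he with ⟨rfl, -⟩ | ⟨rfl, -⟩
      · exact Or.inl .rfl
      · exact Or.inr .rfl
    · have hadj : (G.deleteEdges {s(c, d)}).Adj w v :=
        deleteEdges_adj.mpr ⟨hvw.symm, by rwa [Set.mem_singleton_iff, Sym2.eq_swap]⟩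
      exact ih.imp (·.trans hadj.reachable) (·.trans hadj.reachable)

lemma SimpleGraph.headSide_eq_of_reachable {g : Sym2 V} {u v : V}
    (huv : (G.deleteEdges {g}).Reachable u v) : G.headSide σ g u = G.headSide σ g v := by
  rw [Bool.eq_iff_iff, headSide_eq_true_iff, headSide_eq_true_iff]
  exact ⟨(·.trans huv), (·.trans huv.symm)⟩

/-- Deleting two distinct edges `g, h` of a tree leaves three components, so of the four
combinations of sides of `g` and of `h` one is never attained. -/
theorem SimpleGraph.IsTree.exists_forall_headSide_ne (hG : G.IsTree)
    (hσ : ∀ e, s((σ e).1, (σ e).2) = e) {g h : Sym2 V} (hg : g ∈ G.edgeSet) (hgh : g ≠ h) :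
    ∃ s t : Bool, ∀ v, (G.headSide σ g v, G.headSide σ h v) ≠ (s, t) := by
  -- the combination: on the far side of `g` from `h`, and on the far side of `h` from `g`
  refine ⟨!G.headSide σ g (σ h).1, !G.headSide σ h (σ g).1, fun v hv => ?_⟩
  obtain ⟨hvg, hvh⟩ := Prod.mk.inj hv
  have key : ∀ u, (G.deleteEdges {g}).Reachable u v →
      G.headSide σ h u ≠ G.headSide σ h (σ g).1 := by
    rintro u ⟨W⟩ hu
    have hc' : (σ h).1 ∉ W.support := fun hmem => by
      obtain ⟨q, -, -⟩ := mem_support_iff_exists_append.mp hmem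
      have := headSide_eq_of_reachable σ (W.reachable.symm.trans q.reachable)
      cases G.headSide σ g (σ h).1 <;> simp_all
    have hW : ∀ e ∈ W.edges, e ∈ (G.deleteEdges {h}).edgeSet := fun e he => by
      refine edgeSet_deleteEdges _ ▸ ⟨?_, fun heh => hc' ?_⟩
      · exact (edgeSet_deleteEdges _ ▸ W.edges_subset_edgeSet he).1
      · rw [Set.mem_singleton_iff.mp heh, ← hσ h] at he
        exact W.fst_mem_support_of_mem_edges he
    have := headSide_eq_of_reachable σ (W.transfer _ hW).reachable
    cases G.headSide σ h (σ g).1 <;> simp_all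
  have hgc : (G.deleteEdges {h}).Adj (σ g).1 (σ g).2 :=
    deleteEdges_adj.mpr ⟨by rwa [← mem_edgeSet, hσ g], by rwa [hσ g]⟩
  have hcd := (hG.connected.preconnected v (σ g).1).deleteEdges_left_or_right (d := (σ g).2)
  rw [hσ g] at hcd
  rcases hcd with hc | hd
  · exact key _ hc rfl
  · exact key _ hd (headSide_eq_of_reachable σ hgc.reachable).symm

variable [DecidableEq V]

lemma walkFlow_append {u v w : V} (W₁ : G.Walk u v) (W₂ : G.Walk v w) (g : Sym2 V) :
    walkFlow σ (W₁.append W₂) g = walkFlow σ W₁ g + walkFlow σ W₂ g := by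
  simp only [walkFlow, darts_append, List.filter_append, List.length_append]
  push_cast
  ring

lemma walkFlow_eq_zero_of_notMem_edges {u v : V} (W : G.Walk u v) {g : Sym2 V}
    (hσ : s((σ g).1, (σ g).2) = g) (hg : g ∉ W.edges) : walkFlow σ W g = 0 := by
  have hnil : ∀ q : V × V, s(q.1, q.2) = g →
      W.darts.filter (fun d => d.toProd = q) = [] := by
    intro q hq
    refine List.filter_eq_nil_iff.mpr fun d hd hdq => hg ?_
    rw [← hq, ← of_decide_eq_true hdq]
    exact List.mem_map_of_mem hd
  rw [walkFlow, hnil _ hσ, hnil _ (by rw [Prod.fst_swap, Prod.snd_swap, Sym2.eq_swap, hσ])]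
  simp

lemma SimpleGraph.IsAcyclic.walkFlow_cons_nil (hG : G.IsAcyclic) {g : Sym2 V}
    (hσ : s((σ g).1, (σ g).2) = g) {a b : V} (hab : G.Adj a b) :
    walkFlow σ (cons hab nil) g = (G.headSide σ g b).toInt - (G.headSide σ g a).toInt := by
  have hflow : walkFlow σ (cons hab nil) g =
      (if (a, b) = σ g then 1 else 0) - (if (a, b) = (σ g).swap then 1 else 0) := by
    simp only [walkFlow, darts_cons, darts_nil, List.filter_cons, List.filter_nil,
      decide_eq_true_eq]
    split_ifs <;> rfl
  rw [hflow]
  by_cases hg : s(a, b) = g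
  · subst hg
    have hbr : ¬ (G.deleteEdges {s(a, b)}).Reachable a b :=
      isAcyclic_iff_forall_isBridge.mp hG (e := s(a, b)) hab
    rcases Sym2.eq_iff.mp hσ with ⟨h1, h2⟩ | ⟨h1, h2⟩
    · have ha : G.headSide σ s(a, b) a = false := by
        rw [← Bool.not_eq_true, headSide_eq_true_iff, h2]
        exact fun h => hbr h.symm
      have hb : G.headSide σ s(a, b) b = true := by
        rw [headSide_eq_true_iff, h2]
      simp [ha, hb, Prod.ext_iff, h1, h2, hab.ne]
    · have ha : G.headSide σ s(a, b) a = true := by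
        rw [headSide_eq_true_iff, h2]
      have hb : G.headSide σ s(a, b) b = false := by
        rw [← Bool.not_eq_true, headSide_eq_true_iff, h2]
        exact hbr
      simp [ha, hb, Prod.ext_iff, h1, h2, hab.ne]
  · have hadj : (G.deleteEdges {g}).Adj a b := deleteEdges_adj.mpr ⟨hab, hg⟩
    have hside : G.headSide σ g a = G.headSide σ g b :=
      headSide_eq_of_reachable σ hadj.reachable
    have h1 : (a, b) ≠ σ g := fun h => hg (by rw [← hσ, ← h])
    have h2 : (a, b) ≠ (σ g).swap := fun h => hg (by
      rw [← hσ, Sym2.eq_swap, ← Prod.fst_swap, ← Prod.snd_swap, ← h])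
    simp [h1, h2, hside]

theorem SimpleGraph.IsAcyclic.walkFlow_eq_headSide_sub (hG : G.IsAcyclic) {g : Sym2 V}
    (hσ : s((σ g).1, (σ g).2) = g) {u v : V} (W : G.Walk u v) :
    walkFlow σ W g = (G.headSide σ g v).toInt - (G.headSide σ g u).toInt := by
  induction W with
  | nil => simp [walkFlow]
  | cons hab W ih =>
    rw [← cons_nil_append, walkFlow_append, hG.walkFlow_cons_nil σ hσ hab, ih]
    ring

lemma SimpleGraph.IsAcyclic.natAbs_walkFlow_le_one (hG : G.IsAcyclic) {g : Sym2 V}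
    (hσ : s((σ g).1, (σ g).2) = g) {u v : V} (W : G.Walk u v) :
    (walkFlow σ W g).natAbs ≤ 1 := by
  rw [hG.walkFlow_eq_headSide_sub σ hσ]
  cases G.headSide σ g u <;> cases G.headSide σ g v <;> decide

/-- Two antipodal pairs of points of `Bool × Bool` avoiding a common point `(s, t)` lie on
the same diagonal. -/
lemma Bool.toInt_sub_mul_eq_of_forall_ne (ax ay az aw bx b_y bz bw s t : Bool)
    (hx : (ax, bx) ≠ (s, t)) (hy : (ay, b_y) ≠ (s, t)) (hz : (az, bz) ≠ (s, t))
    (hw : (aw, bw) ≠ (s, t))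
    (ha : (ay.toInt - ax.toInt) * (aw.toInt - az.toInt) ≠ 0)
    (hb : (b_y.toInt - bx.toInt) * (bw.toInt - bz.toInt) ≠ 0) :
    (ay.toInt - ax.toInt) * (aw.toInt - az.toInt) =
      (b_y.toInt - bx.toInt) * (bw.toInt - bz.toInt) := by
  revert ax ay az aw bx b_y bz bw s t
  decide

theorem SimpleGraph.IsTree.walkFlow_mul_eq (hG : G.IsTree)
    (hσ : ∀ e, s((σ e).1, (σ e).2) = e) {x y z w : V} (P : G.Walk x y) (Q : G.Walk z w)
    {g h : Sym2 V}
    (hg : walkFlow σ P g * walkFlow σ Q g ≠ 0) (hh : walkFlow σ P h * walkFlow σ Q h ≠ 0) :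
    walkFlow σ P g * walkFlow σ Q g = walkFlow σ P h * walkFlow σ Q h := by
  obtain rfl | hgh := eq_or_ne g h
  · rfl
  have hgP : g ∈ P.edges := by
    by_contra hgP
    simp [walkFlow_eq_zero_of_notMem_edges σ P (hσ g) hgP] at hg
  obtain ⟨s, t, hst⟩ := hG.exists_forall_headSide_ne σ hσ (P.edges_subset_edgeSet hgP) hgh
  simp only [hG.isAcyclic.walkFlow_eq_headSide_sub σ (hσ _)] at hg hh ⊢
  exact Bool.toInt_sub_mul_eq_of_forall_ne _ _ _ _ _ _ _ _ s t
    (hst x) (hst y) (hst z) (hst w) hg hh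

lemma ncard_support_eq_natAbs_sum {α : Type*} [Fintype α] (φ : α → ℤ)
    (hφ : ∀ a, (φ a).natAbs ≤ 1) (hcoh : ∀ a b, φ a ≠ 0 → φ b ≠ 0 → φ a = φ b) :
    (Function.support φ).ncard = (∑ a, φ a).natAbs := by
  classical
  rcases eq_or_ne φ 0 with rfl | hne
  · simp
  obtain ⟨a₀, ha₀⟩ := Function.ne_iff.mp hne
  have hsum : ∑ a, φ a = (univ.filter (φ · ≠ 0)).card * φ a₀ := by
    rw [← Finset.sum_filter_ne_zero, ← nsmul_eq_mul, ← Finset.sum_const]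
    exact Finset.sum_congr rfl fun a ha => hcoh a a₀ (Finset.mem_filter.mp ha).2 ha₀
  have hunit : (φ a₀).natAbs = 1 := le_antisymm (hφ a₀) (Int.natAbs_pos.mpr ha₀)
  rw [hsum, Int.natAbs_mul, hunit, mul_one, Int.natAbs_natCast, ← Set.ncard_coe_finset]
  congr
  ext a
  simp

end

theorem stmt_12_general {V : Type*} [Fintype V] [DecidableEq V] (G T : SimpleGraph V)
    (σ : Sym2 V → V × V) (hσ : ∀ e, Sym2.mk (σ e).1 (σ e).2 = e)
    (hT : T.IsTree)
    (p : ∀ e : Sym2 V, e ∈ G.edgeSet \ T.edgeSet → T.Walk (σ e).2 (σ e).1)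
    (C : Sym2 V → Sym2 V → ℤ)
    (hC : ∀ e (he : e ∈ G.edgeSet \ T.edgeSet),
      C e = (fun f => if f = e then 1 else 0) + walkFlow σ (p e he))
    (e f : Sym2 V) (he : e ∈ G.edgeSet \ T.edgeSet) (hf : f ∈ G.edgeSet \ T.edgeSet)
    (hef : e ≠ f) :
    {g : Sym2 V | C e g ≠ 0 ∧ C f g ≠ 0}.ncard = (flowInner (C e) (C f)).natAbs := by
  have hzero : ∀ {a b : V} (W : T.Walk a b) {g}, g ∈ G.edgeSet \ T.edgeSet →
      walkFlow σ W g = 0 :=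
    fun W g hg => walkFlow_eq_zero_of_notMem_edges σ W (hσ g)
      fun hW => hg.2 (W.edges_subset_edgeSet hW)
  have hprod : ∀ g, C e g * C f g = walkFlow σ (p e he) g * walkFlow σ (p f hf) g := by
    intro g
    rw [hC e he, hC f hf]
    rcases eq_or_ne g e with rfl | hge
    · simp [hef, hzero (p g he) he, hzero (p f hf) he]
    rcases eq_or_ne g f with rfl | hgf
    · simp [hge, hzero (p e he) hf, hzero (p g hf) hf]
    · simp [hge, hgf]
  have hset : {g | C e g ≠ 0 ∧ C f g ≠ 0} =
      Function.support fun g => walkFlow σ (p e he) g * walkFlow σ (p f hf) g := by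
    ext g
    simp [← hprod]
  rw [hset, flowInner, Finset.sum_congr rfl fun g _ => hprod g]
  refine ncard_support_eq_natAbs_sum _ (fun g => ?_) fun g h => hT.walkFlow_mul_eq σ hσ _ _
  rw [Int.natAbs_mul]
  exact Left.mul_le_one (hT.isAcyclic.natAbs_walkFlow_le_one σ (hσ g) _)
    (hT.isAcyclic.natAbs_walkFlow_le_one σ (hσ g) _)

/-- With `T` a spanning tree of a finite connected oriented graph `G`,
for any two distinct fundamental circuits `C e`, `C f` (`e ≠ f` not in `T`), the
number of common edges of the underlying circuits equals the absolute value of their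
inner product: `|C e ∩ C f| = |(C e, C f)|` (spanning-tree bases are
cancellation-free). -/
theorem stmt_12 {V : Type*} [Fintype V] [DecidableEq V] (G T : SimpleGraph V)
    (hG : G.Connected) (σ : Sym2 V → V × V) (hσ : ∀ e, Sym2.mk (σ e).1 (σ e).2 = e)
    (hTG : T ≤ G) (hT : T.IsTree)
    (p : ∀ e : Sym2 V, e ∈ G.edgeSet \ T.edgeSet → T.Walk (σ e).2 (σ e).1)
    (hp : ∀ e he, (p e he).IsPath)
    (C : Sym2 V → Sym2 V → ℤ)
    (hC : ∀ e (he : e ∈ G.edgeSet \ T.edgeSet),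
      C e = (fun f => if f = e then 1 else 0) + walkFlow σ (p e he))
    (e f : Sym2 V) (he : e ∈ G.edgeSet \ T.edgeSet) (hf : f ∈ G.edgeSet \ T.edgeSet)
    (hef : e ≠ f) :
    {g : Sym2 V | C e g ≠ 0 ∧ C f g ≠ 0}.ncard = (flowInner (C e) (C f)).natAbs :=
  stmt_12_general G T σ hσ hT p C hC e f he hf hef
end

section
/- Let G and G' be finite 2-edge-connected graphs with orientations, and let φ: F(G) → F(G') be an isometry of their lattices of integer flows. Then φ maps circuit elements of F(G) bijectively to circuit elements of F(G'). -/
open Finset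

/-!
A nonzero flow `v` is a circuit element iff it is *indecomposable*: `v = a + b` with `a, b` flows
and `⟨a, b⟩ ≥ 0` forces `a = 0` or `b = 0`. This is stated in terms of the lattice alone, so it is
preserved by isometries.

If `c` is the flow of a cycle and `a + b = c`, then `a_e + b_e ∈ {-1, 0, 1}` gives `a_e b_e ≤ 0` on
every edge, so `⟨a, b⟩ ≥ 0` forces `a_e b_e = 0` everywhere. Thus `a` is supported on the cycle;
a flow supported on a path vanishes, so `a = t c`, and `a_e b_e = 0` on a cycle edge gives
`t (1 - t) = 0`. Conversely, Kirchhoff's law shows that every vertex entered by a dart along which a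
nonzero flow `v` is positive is also left by one, so `v` contains a cycle `c` traversed in the
direction of `v`. Then `c_e v_e ≥ c_e²` on every edge, i.e. `⟨c, v - c⟩ ≥ 0`, and indecomposability
forces `v = c`.
-/

namespace SimpleGraph

open Walk

variable {V : Type*} {G : SimpleGraph V}

theorem Walk.IsPath.snd_ne_start {u v : V} {p : G.Walk u v} (hp : p.IsPath) {d : G.Dart}
    (hd : d ∈ p.darts) : d.snd ≠ u := by
  have hnodup := hp.support_nodup
  rw [← p.cons_tail_support, List.nodup_cons, ← p.map_snd_darts] at hnodup
  exact fun h => hnodup.1 (List.mem_map.mpr ⟨d, hd, h⟩)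

variable (P : G.Dart → Prop)

/-- Closing a `P`-path `q` by a `P`-dart back to its start gives a cycle: the closing edge cannot
already lie on `q`, as `q` would have to traverse it forwards (entering its own start) or backwards
(which `P` forbids). -/
theorem isCycle_cons_of_isPath {u x : V} {q : G.Walk x u} (hq : q.IsPath)
    (hqP : ∀ d ∈ q.darts, P d) (hsymm : ∀ d, P d → ¬ P d.symm) (h : G.Adj u x)
    (hP : P ⟨(u, x), h⟩) : (cons h q).IsCycle := by
  refine (cons_isCycle_iff q h).mpr ⟨hq, fun he => ?_⟩
  obtain ⟨d, hd, hde⟩ := List.mem_map.mp he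
  rcases (dart_edge_eq_iff d ⟨(u, x), h⟩).mp hde with rfl | rfl
  · exact hq.snd_ne_start hd rfl
  · exact hsymm _ hP (hqP _ hd)

theorem exists_isCycle_of_forall_exists_dart [Fintype V] [DecidableEq V]
    (hsymm : ∀ d, P d → ¬ P d.symm) (hpred : ∀ d, P d → ∃ d', P d' ∧ d'.snd = d.fst)
    {d₀ : G.Dart} (hd₀ : P d₀) :
    ∃ (u : V) (p : G.Walk u u), p.IsCycle ∧ ∀ d ∈ p.darts, P d := by
  -- Without a `P`-cycle every `P`-path could be prolonged backwards, so paths would be unbounded.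
  by_contra hno
  suffices hpath : ∀ n, ∃ (x y : V) (p : G.Walk x y), p.IsPath ∧ p.length = n ∧
      (∀ d ∈ p.darts, P d) ∧ ∃ d, P d ∧ d.fst = x by
    obtain ⟨x, y, p, hp, hlen, -⟩ := hpath (Fintype.card V)
    exact (hp.length_lt).ne hlen
  intro n
  induction n with
  | zero => exact ⟨d₀.fst, d₀.fst, nil, .nil, rfl, by simp, d₀, hd₀, rfl⟩
  | succ n ih =>
    obtain ⟨x, y, p, hp, hlen, hpP, d, hd, rfl⟩ := ih
    obtain ⟨⟨⟨w, x⟩, h⟩, hd', rfl : x = d.fst⟩ := hpred d hd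
    by_cases hw : w ∈ p.support
    · have hqP : ∀ d ∈ (p.takeUntil w hw).darts, P d :=
        fun d hd => hpP d (p.darts_takeUntil_subset_darts hw hd)
      refine (hno ⟨w, _, isCycle_cons_of_isPath P (hp.takeUntil hw) hqP hsymm h hd', ?_⟩).elim
      simpa only [darts_cons, List.mem_cons, forall_eq_or_imp] using ⟨hd', hqP⟩
    · exact ⟨w, y, cons h p, hp.cons hw, by simp [hlen], by simpa [hd'] using hpP, _, hd', rfl⟩

end SimpleGraph

section Orientation

open SimpleGraph Walk

variable {V : Type*} {G : SimpleGraph V} {σ : Sym2 V → V × V}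

theorem orientation_eq_or_eq_swap (hσ : ∀ e, s((σ e).1, (σ e).2) = e) (d : G.Dart) :
    σ d.edge = d.toProd ∨ σ d.edge = d.toProd.swap :=
  Sym2.mk_eq_mk_iff.mp (hσ d.edge)

theorem sum_filter_fst_eq_sum_darts [Fintype V] [DecidableEq V] [DecidableRel G.Adj]
    (τ : Sym2 V → V × V) (hτ : ∀ e, s((τ e).1, (τ e).2) = e) {a : Sym2 V → ℤ}
    (ha : ∀ e, a e ≠ 0 → e ∈ G.edgeSet) (w : V) :
    ∑ e ∈ univ.filter (fun e => (τ e).1 = w), a e =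
      ∑ d ∈ univ.filter (fun d : G.Dart => d.fst = w ∧ d.toProd = τ d.edge), a d.edge := by
  symm
  refine sum_bij_ne_zero (fun d _ _ => d.edge) (fun d hd _ => ?_) (fun d₁ hd₁ _ d₂ hd₂ _ h => ?_)
    (fun e he hae => ?_) (fun _ _ _ => rfl)
  · simp only [mem_filter, mem_univ, true_and] at hd ⊢
    rw [← hd.2]; exact hd.1
  · simp only [mem_filter, mem_univ, true_and] at hd₁ hd₂
    exact Dart.ext _ _ (by rw [hd₁.2, hd₂.2, h])
  · simp only [mem_filter, mem_univ, true_and] at he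
    have hadj : G.Adj (τ e).1 (τ e).2 := by rw [← SimpleGraph.mem_edgeSet, hτ e]; exact ha e hae
    exact ⟨⟨τ e, hadj⟩, by simpa [hτ e] using he, by simpa [hτ e] using hae, hτ e⟩

variable [DecidableEq V]

def dartSign (σ : Sym2 V → V × V) (d : G.Dart) : ℤ := if d.toProd = σ d.edge then 1 else -1

theorem dartSign_mul_self (d : G.Dart) : dartSign σ d * dartSign σ d = 1 := by
  unfold dartSign; split_ifs <;> rfl

theorem dartSign_ne_zero (d : G.Dart) : dartSign σ d ≠ 0 :=
  left_ne_zero_of_mul_eq_one (dartSign_mul_self d)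

variable (hσ : ∀ e, s((σ e).1, (σ e).2) = e)
include hσ

theorem dartSign_symm (d : G.Dart) : dartSign σ d.symm = -dartSign σ d := by
  have hne : d.toProd ≠ d.toProd.swap := fun h => d.adj.ne (congrArg Prod.fst h)
  rcases orientation_eq_or_eq_swap hσ d with h | h <;>
    simp [dartSign, Dart.edge_symm, Dart.symm_toProd, h, hne, hne.symm]

theorem dartSign_symm_mul (a : Sym2 V → ℤ) (d : G.Dart) :
    dartSign σ d.symm * a d.symm.edge = -(dartSign σ d * a d.edge) := by
  rw [dartSign_symm hσ, Dart.edge_symm, neg_mul]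

theorem ite_sub_ite_eq_single_dartSign (d : G.Dart) (e : Sym2 V) :
    ((if d.toProd = σ e then 1 else 0) - if d.toProd = (σ e).swap then 1 else 0 : ℤ) =
      (Pi.single d.edge (dartSign σ d) : Sym2 V → ℤ) e := by
  have hne : d.toProd ≠ d.toProd.swap := fun h => d.adj.ne (congrArg Prod.fst h)
  by_cases he : e = d.edge
  · subst he
    rcases orientation_eq_or_eq_swap hσ d with h | h <;>
      simp [dartSign, h, hne]
  · have h₁ : d.toProd ≠ σ e := fun h => he (by rw [← hσ e, ← h]; rfl)
    have h₂ : d.toProd ≠ (σ e).swap := fun h => he (by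
      rw [← hσ e, Sym2.eq_swap, Dart.edge, h]; rfl)
    simp [h₁, h₂, he]

theorem walkFlow_cons {u x y : V} (h : G.Adj u x) (p : G.Walk x y) :
    walkFlow σ (cons h p) =
      Pi.single (⟨(u, x), h⟩ : G.Dart).edge (dartSign σ ⟨(u, x), h⟩) + walkFlow σ p := by
  funext e
  rw [Pi.add_apply, ← ite_sub_ite_eq_single_dartSign hσ ⟨(u, x), h⟩ e]
  simp only [walkFlow, darts_cons, List.filter_cons, decide_eq_true_eq]
  split_ifs <;> push_cast [List.length_cons] <;> ring

theorem walkFlow_eq_zero_of_notMem_edges_s15 {u y : V} (p : G.Walk u y) {e : Sym2 V}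
    (he : e ∉ p.edges) : walkFlow σ p e = 0 := by
  induction p with
  | nil => simp [walkFlow]
  | cons h p ih =>
    rw [edges_cons, List.mem_cons, not_or] at he
    have hne : e ≠ (⟨(_, _), h⟩ : G.Dart).edge := he.1
    rw [walkFlow_cons hσ, Pi.add_apply, Pi.single_eq_of_ne hne, ih he.2, zero_add]

theorem SimpleGraph.Walk.IsTrail.walkFlow_edge {u y : V} {p : G.Walk u y} (hp : p.IsTrail)
    {d : G.Dart} (hd : d ∈ p.darts) : walkFlow σ p d.edge = dartSign σ d := by
  induction p with
  | nil => simp at hd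
  | cons h p ih =>
    rw [isTrail_cons] at hp
    rw [darts_cons, List.mem_cons] at hd
    rw [walkFlow_cons hσ, Pi.add_apply]
    rcases hd with rfl | hd
    · rw [Pi.single_eq_same,
        walkFlow_eq_zero_of_notMem_edges_s15 hσ p (e := (⟨(_, _), h⟩ : G.Dart).edge) hp.2, add_zero]
    · have hne : d.edge ≠ (⟨(_, _), h⟩ : G.Dart).edge := fun h' =>
        hp.2 (show (⟨(_, _), h⟩ : G.Dart).edge ∈ p.edges from h' ▸ List.mem_map_of_mem hd)
      rw [Pi.single_eq_of_ne hne, zero_add, ih hp.1 hd]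

theorem SimpleGraph.Walk.IsTrail.walkFlow_mul_self_le_one {u y : V} {p : G.Walk u y}
    (hp : p.IsTrail) (e : Sym2 V) : walkFlow σ p e * walkFlow σ p e ≤ 1 := by
  by_cases he : e ∈ p.edges
  · obtain ⟨d, hd, rfl⟩ := List.mem_map.mp he
    rw [hp.walkFlow_edge hσ hd, dartSign_mul_self]
  · simp [walkFlow_eq_zero_of_notMem_edges_s15 hσ p he]

theorem SimpleGraph.Walk.IsTrail.walkFlow_mul_self_le_mul {u y : V} {p : G.Walk u y}
    (hp : p.IsTrail) {a : Sym2 V → ℤ} (ha : ∀ d ∈ p.darts, 0 < dartSign σ d * a d.edge)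
    (e : Sym2 V) :
    walkFlow σ p e * walkFlow σ p e ≤ walkFlow σ p e * a e := by
  by_cases he : e ∈ p.edges
  · obtain ⟨d, hd, rfl⟩ := List.mem_map.mp he
    rw [hp.walkFlow_edge hσ hd, dartSign_mul_self]
    exact ha d hd
  · simp [walkFlow_eq_zero_of_notMem_edges_s15 hσ p he]

theorem SimpleGraph.Walk.IsCycle.exists_walkFlow_mul_self_eq_one {u : V} {p : G.Walk u u}
    (hp : p.IsCycle) :
    ∃ e, walkFlow σ p e * walkFlow σ p e = 1 := by
  refine ⟨(p.firstDart hp.not_nil).edge, ?_⟩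
  rw [hp.isTrail.walkFlow_edge hσ (firstDart_mem_darts hp.not_nil), dartSign_mul_self]

end Orientation

section Kirchhoff

open SimpleGraph Walk

variable {V : Type*} [Fintype V] [DecidableEq V] {G : SimpleGraph V} {σ : Sym2 V → V × V}

def netOutflow (σ : Sym2 V → V × V) (a : Sym2 V → ℤ) (w : V) : ℤ :=
  ∑ e ∈ univ.filter (fun e => (σ e).1 = w), a e - ∑ e ∈ univ.filter (fun e => (σ e).2 = w), a e

theorem mem_flowSubmodule_iff {a : Sym2 V → ℤ} :
    a ∈ flowSubmodule G σ ↔ (∀ e, a e ≠ 0 → e ∈ G.edgeSet) ∧ ∀ w, netOutflow σ a w = 0 := by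
  simp only [netOutflow, sub_eq_zero]; rfl

theorem netOutflow_add (a b : Sym2 V → ℤ) (w : V) :
    netOutflow σ (a + b) w = netOutflow σ a w + netOutflow σ b w := by
  simp only [netOutflow, Pi.add_apply, sum_add_distrib]; ring

variable (hσ : ∀ e, s((σ e).1, (σ e).2) = e)
include hσ

theorem netOutflow_single_dartSign (d : G.Dart) (w : V) :
    netOutflow σ (Pi.single d.edge (dartSign σ d)) w =
      (if d.fst = w then 1 else 0) - if d.snd = w then 1 else 0 := by
  have hne : d.toProd ≠ d.toProd.swap := fun h => d.adj.ne (congrArg Prod.fst h)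
  simp only [netOutflow, sum_pi_single', mem_filter, mem_univ, true_and]
  rcases orientation_eq_or_eq_swap hσ d with h | h
  · simp [dartSign, h]
  · simp [dartSign, h, hne]; split_ifs <;> norm_num

theorem netOutflow_walkFlow {u y : V} (p : G.Walk u y) (w : V) :
    netOutflow σ (walkFlow σ p) w = (if u = w then 1 else 0) - if y = w then 1 else 0 := by
  induction p with
  | nil => simp [walkFlow, netOutflow]
  | cons h p ih =>
    rw [walkFlow_cons hσ, netOutflow_add, netOutflow_single_dartSign hσ, ih]
    ring

theorem walkFlow_mem_flowSubmodule {u : V} (p : G.Walk u u) :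
    walkFlow σ p ∈ flowSubmodule G σ := by
  refine mem_flowSubmodule_iff.mpr ⟨fun e he => ?_, fun w => ?_⟩
  · by_contra hG
    exact he (walkFlow_eq_zero_of_notMem_edges_s15 hσ p fun hp => hG (p.edges_subset_edgeSet hp))
  · rw [netOutflow_walkFlow hσ, sub_self]

theorem netOutflow_eq_sum_darts [DecidableRel G.Adj] {a : Sym2 V → ℤ}
    (ha : ∀ e, a e ≠ 0 → e ∈ G.edgeSet) (w : V) :
    netOutflow σ a w =
      ∑ d ∈ univ.filter (fun d : G.Dart => d.fst = w), dartSign σ d * a d.edge := by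
  have hswap : ∀ e, s((σ e).swap.1, (σ e).swap.2) = e := fun e => Sym2.eq_swap.trans (hσ e)
  rw [netOutflow, sum_filter_fst_eq_sum_darts σ hσ ha,
    show univ.filter (fun e => (σ e).2 = w) = univ.filter (fun e => (σ e).swap.1 = w) from rfl,
    sum_filter_fst_eq_sum_darts _ hswap ha, sum_filter, sum_filter, sum_filter, ← sum_sub_distrib]
  refine sum_congr rfl fun d _ => ?_
  have hne : d.toProd ≠ d.toProd.swap := fun h => d.adj.ne (congrArg Prod.fst h)
  rcases orientation_eq_or_eq_swap hσ d with h | h <;> by_cases hw : d.fst = w <;>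
    simp [dartSign, h, hne, hw]

theorem eq_zero_of_support_subset_edges {x y : V} {q : G.Walk x y} (hq : q.IsPath)
    {a : Sym2 V → ℤ} (ha : a ∈ flowSubmodule G σ) (hsupp : ∀ e, a e ≠ 0 → e ∈ q.edges) :
    a = 0 := by
  classical
  induction q with
  | nil => exact funext fun e => by_contra fun hae => by simpa using hsupp e hae
  | @cons x x₁ y h q ih =>
    rw [cons_isPath_iff] at hq
    set d₀ : G.Dart := ⟨(x, x₁), h⟩
    have hout : ∀ d : G.Dart, d.fst = x → d ≠ d₀ → a d.edge = 0 := by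
      intro d hdx hd₀
      by_contra hae
      rcases List.mem_cons.mp (hsupp _ hae) with he | he
      · rcases (dart_edge_eq_iff d d₀).mp he with rfl | rfl
        · exact hd₀ rfl
        · exact h.ne hdx.symm
      · exact hq.2 (hdx ▸ q.fst_mem_support_of_mem_edges he)
    have hd₀ : a d₀.edge = 0 := by
      have hflow := (mem_flowSubmodule_iff.mp ha).2 x
      rw [netOutflow_eq_sum_darts hσ ha.1, sum_eq_single_of_mem d₀ (by simp [d₀])
        fun d hd hne => by rw [hout d (mem_filter.mp hd).2 hne, mul_zero]] at hflow
      exact (mul_eq_zero.mp hflow).resolve_left (dartSign_ne_zero d₀)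
    refine ih hq.1 fun e hae => (List.mem_cons.mp (hsupp e hae)).resolve_left ?_
    rintro rfl
    exact hae hd₀

theorem SimpleGraph.Walk.IsCycle.exists_eq_smul_walkFlow {u : V} {p : G.Walk u u} (hp : p.IsCycle)
    {a : Sym2 V → ℤ} (ha : a ∈ flowSubmodule G σ) (hsupp : ∀ e, a e ≠ 0 → e ∈ p.edges) :
    ∃ t : ℤ, a = t • walkFlow σ p := by
  cases p with
  | nil => exact absurd hp not_isCycle_nil
  | @cons _ x _ h q =>
    let d₀ : G.Dart := ⟨(u, x), h⟩
    have hc₀ : walkFlow σ (cons h q) d₀.edge = dartSign σ d₀ :=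
      hp.isTrail.walkFlow_edge hσ List.mem_cons_self
    rw [cons_isCycle_iff] at hp
    have hb := sub_mem ha (Submodule.smul_mem _ (a d₀.edge * dartSign σ d₀)
      (walkFlow_mem_flowSubmodule hσ (cons h q)))
    refine ⟨_, sub_eq_zero.mp (eq_zero_of_support_subset_edges hσ hp.1 hb fun e he => ?_)⟩
    have hep : e ∈ (cons h q).edges := by
      by_contra hep
      simp [hsupp e |>.mt hep, walkFlow_eq_zero_of_notMem_edges_s15 hσ _ hep] at he
    refine (List.mem_cons.mp hep).resolve_left ?_
    rintro rfl
    apply he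
    show a d₀.edge - (a d₀.edge * dartSign σ d₀) * walkFlow σ (cons h q) d₀.edge = 0
    rw [hc₀, mul_assoc, dartSign_mul_self, mul_one, sub_self]

theorem exists_conforming_dart_snd_eq {a : Sym2 V → ℤ} (ha : a ∈ flowSubmodule G σ)
    {d : G.Dart} (hd : 0 < dartSign σ d * a d.edge) :
    ∃ d' : G.Dart, 0 < dartSign σ d' * a d'.edge ∧ d'.snd = d.fst := by
  classical
  by_contra! hno
  have hflow := (mem_flowSubmodule_iff.mp ha).2 d.fst
  rw [netOutflow_eq_sum_darts hσ ha.1] at hflow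
  refine hflow.not_gt (sum_pos' (fun d' hd' => ?_) ⟨d, by simp, hd⟩)
  by_contra! hneg
  refine hno d'.symm ?_ (mem_filter.mp hd').2
  rw [dartSign_symm_mul hσ]
  exact neg_pos.mpr hneg

theorem exists_isCycle_conforming {a : Sym2 V → ℤ} (ha : a ∈ flowSubmodule G σ) (hne : a ≠ 0) :
    ∃ (u : V) (p : G.Walk u u), p.IsCycle ∧ ∀ d ∈ p.darts, 0 < dartSign σ d * a d.edge := by
  obtain ⟨e, hae⟩ := Function.ne_iff.mp hne
  have hadj : G.Adj (σ e).1 (σ e).2 := by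
    rw [← SimpleGraph.mem_edgeSet, hσ e]; exact ha.1 e hae
  let d : G.Dart := ⟨σ e, hadj⟩
  have hde : d.edge = e := hσ e
  have hd : dartSign σ d * a d.edge ≠ 0 :=
    mul_ne_zero (dartSign_ne_zero d) (hde ▸ hae)
  have hsymm : ∀ d : G.Dart,
      0 < dartSign σ d * a d.edge → ¬ 0 < dartSign σ d.symm * a d.symm.edge :=
    fun d hd => by rw [dartSign_symm_mul hσ]; exact not_lt.mpr (neg_nonpos.mpr hd.le)
  rcases hd.lt_or_gt with hneg | hpos
  · refine exists_isCycle_of_forall_exists_dart _ hsymm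
      (fun _ => exists_conforming_dart_snd_eq hσ ha) (d₀ := d.symm) ?_
    rw [dartSign_symm_mul hσ]; exact neg_pos.mpr hneg
  · exact exists_isCycle_of_forall_exists_dart _ hsymm
      (fun _ => exists_conforming_dart_snd_eq hσ ha) hpos

end Kirchhoff

theorem Int.mul_nonpos_of_mul_self_add_le_one {x y : ℤ} (h : (x + y) * (x + y) ≤ 1) :
    x * y ≤ 0 := by
  nlinarith [sq_nonneg (x - y)]

section Indecomposable

open SimpleGraph Walk

variable {V : Type*} [Fintype V] [DecidableEq V]

/-- By the criterion of Bacher, de la Harpe and Nagnibeda, these are the strict Voronoi vectors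
of the lattice `L`. -/
def IsIndecomposable (L : Submodule ℤ (Sym2 V → ℤ)) (v : L) : Prop :=
  v ≠ 0 ∧ ∀ a b : L, a + b = v → 0 ≤ flowInner (a : Sym2 V → ℤ) b → a = 0 ∨ b = 0

theorem isIndecomposable_map_iff {V' : Type*} [Fintype V'] [DecidableEq V']
    {L : Submodule ℤ (Sym2 V → ℤ)} {L' : Submodule ℤ (Sym2 V' → ℤ)} (φ : L ≃ₗ[ℤ] L')
    (hφ : ∀ a b : L, flowInner (φ a : Sym2 V' → ℤ) (φ b) = flowInner (a : Sym2 V → ℤ) b)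
    (v : L) : IsIndecomposable L' (φ v) ↔ IsIndecomposable L v := by
  simp only [IsIndecomposable, ne_eq, φ.surjective.forall, ← map_add, φ.injective.eq_iff, hφ,
    LinearEquiv.map_eq_zero_iff]

variable {G : SimpleGraph V} {σ : Sym2 V → V × V} (hσ : ∀ e, s((σ e).1, (σ e).2) = e)
include hσ

theorem SimpleGraph.Walk.IsCycle.isIndecomposable_walkFlow {u : V} {p : G.Walk u u}
    (hp : p.IsCycle) :
    IsIndecomposable (flowSubmodule G σ) ⟨walkFlow σ p, walkFlow_mem_flowSubmodule hσ p⟩ := by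
  obtain ⟨e₀, he₀⟩ := hp.exists_walkFlow_mul_self_eq_one hσ
  refine ⟨fun h => ?_, fun ⟨a, ha⟩ ⟨b, hb⟩ hab hin => ?_⟩
  · rw [Submodule.mk_eq_zero] at h
    simp [h] at he₀
  have hab' : ∀ e, a e + b e = walkFlow σ p e := fun e => congrFun (congrArg Subtype.val hab) e
  have hprod : ∀ e, a e * b e ≤ 0 := fun e =>
    Int.mul_nonpos_of_mul_self_add_le_one (hab' e ▸ hp.isTrail.walkFlow_mul_self_le_one hσ e)
  have hzero : ∀ e, a e * b e = 0 := fun e =>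
    (sum_eq_zero_iff_of_nonpos fun e _ => hprod e).mp
      (le_antisymm (sum_nonpos fun e _ => hprod e) hin) e (mem_univ e)
  obtain ⟨t, ht⟩ := hp.exists_eq_smul_walkFlow hσ ha fun e hae => by
    by_contra hep
    have hb : b e = -a e := by
      have := hab' e; rw [walkFlow_eq_zero_of_notMem_edges_s15 hσ p hep] at this; linarith
    exact hae (mul_self_eq_zero.mp (by simpa [hb] using hzero e))
  have ht₀ : t * (1 - t) = 0 := by
    have := hzero e₀
    rw [show b e₀ = walkFlow σ p e₀ - a e₀ by linarith [hab' e₀], ht] at this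
    simp only [Pi.smul_apply, smul_eq_mul] at this
    linear_combination this - (t - t ^ 2) * he₀
  rcases mul_eq_zero.mp ht₀ with rfl | ht₁
  · left
    rw [Submodule.mk_eq_zero, ht, zero_smul]
  · right
    rw [← sub_eq_zero.mp ht₁, one_smul] at ht
    subst ht
    rw [Submodule.mk_eq_zero]
    funext e
    simpa using hab' e

theorem IsIndecomposable.isCircuitElement {v : flowSubmodule G σ}
    (hv : IsIndecomposable (flowSubmodule G σ) v) : IsCircuitElement G σ v := by
  obtain ⟨u, p, hp, hconf⟩ :=
    exists_isCycle_conforming hσ v.2 ((Submodule.coe_eq_zero (x := v)).not.mpr hv.1)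
  let c : flowSubmodule G σ := ⟨walkFlow σ p, walkFlow_mem_flowSubmodule hσ p⟩
  have hin : 0 ≤ flowInner (c : Sym2 V → ℤ) (v - c : flowSubmodule G σ) :=
    sum_nonneg fun e _ => by
      simp only [Submodule.coe_sub, Pi.sub_apply, mul_sub, sub_nonneg]
      exact hp.isTrail.walkFlow_mul_self_le_mul hσ hconf e
  rcases hv.2 c (v - c) (add_sub_cancel c v) hin with hc | hc
  · exact absurd hc (hp.isIndecomposable_walkFlow hσ).1
  · exact ⟨u, p, hp, congrArg Subtype.val (sub_eq_zero.mp hc)⟩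

theorem isCircuitElement_iff_isIndecomposable (v : flowSubmodule G σ) :
    IsCircuitElement G σ v ↔ IsIndecomposable (flowSubmodule G σ) v := by
  refine ⟨fun ⟨_, p, hp, hv⟩ => ?_, IsIndecomposable.isCircuitElement hσ⟩
  rw [show v = ⟨_, walkFlow_mem_flowSubmodule hσ p⟩ from Subtype.ext hv]
  exact hp.isIndecomposable_walkFlow hσ

end Indecomposable

theorem stmt_15_general {V V' : Type*} [Fintype V] [DecidableEq V] [Fintype V'] [DecidableEq V']
    (G : SimpleGraph V) (G' : SimpleGraph V')
    (σ : Sym2 V → V × V) (hσ : ∀ e, Sym2.mk (σ e).1 (σ e).2 = e)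
    (σ' : Sym2 V' → V' × V') (hσ' : ∀ e, Sym2.mk (σ' e).1 (σ' e).2 = e)
    (φ : ↥(flowSubmodule G σ) ≃ₗ[ℤ] ↥(flowSubmodule G' σ'))
    (hiso : ∀ a b : ↥(flowSubmodule G σ),
      flowInner (φ a : Sym2 V' → ℤ) (φ b : Sym2 V' → ℤ) =
        flowInner (a : Sym2 V → ℤ) (b : Sym2 V → ℤ)) :
    ∀ v : ↥(flowSubmodule G σ),
      IsCircuitElement G σ (v : Sym2 V → ℤ) ↔
        IsCircuitElement G' σ' (φ v : Sym2 V' → ℤ) := by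
  intro v
  rw [isCircuitElement_iff_isIndecomposable hσ, isCircuitElement_iff_isIndecomposable hσ',
    isIndecomposable_map_iff φ hiso]

/-- Let `G` and `G'` be finite 2-edge-connected graphs with orientations
and `φ : F(G) ≃ F(G')` an isometry of their lattices of integer flows. Then `φ` maps
circuit elements of `F(G)` bijectively to circuit elements of `F(G')`. -/
theorem stmt_15 {V V' : Type*} [Fintype V] [DecidableEq V] [Fintype V'] [DecidableEq V']
    (G : SimpleGraph V) (G' : SimpleGraph V')
    (hG : G.Connected) (hbr : ∀ e, ¬ G.IsBridge e)
    (hG' : G'.Connected) (hbr' : ∀ e, ¬ G'.IsBridge e)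
    (σ : Sym2 V → V × V) (hσ : ∀ e, Sym2.mk (σ e).1 (σ e).2 = e)
    (σ' : Sym2 V' → V' × V') (hσ' : ∀ e, Sym2.mk (σ' e).1 (σ' e).2 = e)
    (φ : ↥(flowSubmodule G σ) ≃ₗ[ℤ] ↥(flowSubmodule G' σ'))
    (hiso : ∀ a b : ↥(flowSubmodule G σ),
      flowInner (φ a : Sym2 V' → ℤ) (φ b : Sym2 V' → ℤ) =
        flowInner (a : Sym2 V → ℤ) (b : Sym2 V → ℤ)) :
    ∀ v : ↥(flowSubmodule G σ),
      IsCircuitElement G σ (v : Sym2 V → ℤ) ↔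
        IsCircuitElement G' σ' (φ v : Sym2 V' → ℤ) :=
  stmt_15_general G G' σ hσ σ' hσ' φ hiso
end
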